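/- Let 0 ≤ N_1 < N_2 be integers, let w_1 ≠ w_2 belong to ℂ ∖ {0, 1, 1−q}, and let n, m, a, n', m', a' be integers. Then, with w_c = 1−√q, ∑_{N_1 < ℓ ≤ N_2} 1 / ( G(w_1 | n−ℓ+1, m, a) · G(w_2 | ℓ−n', m', a') ) = ( w_c / (w_1 − w_2) ) · [ 1/( G(w_1 | n−N_2, m, a) · G(w_2 | N_2−n', m', a') ) − 1/( G(w_1 | n−N_1, m, a) · G(w_2 | N_1−n', m', a') ) ]. -/

import Mathlib

open MeasureTheory ProbabilityTheory Complex
open scoped Real BigOperators Nat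

noncomputable section

/-- Forward difference operator `∇f(x) = f(x+1) − f(x)`. -/
def nab (f : ℤ → ℂ) : ℤ → ℂ := fun x => f (x + 1) - f x

/-- Inverse difference: `∇⁻¹f(x) = ∑_{y<x} f(y)` (a `tsum`; for functions vanishing
to the left of some integer this is the finite sum of the paper). -/
def nabInv (f : ℤ → ℂ) : ℤ → ℂ := fun x => ∑' y : {y : ℤ // y < x}, f y.1

/-- `∇^k` for `k : ℤ`. -/
def nabIter (k : ℤ) (f : ℤ → ℂ) : ℤ → ℂ :=
  if 0 ≤ k then nab^[k.toNat] f else nabInv^[(-k).toNat] f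

/-- The negative binomial weight `w_m(x)`. -/
def wgt (q : ℝ) (m : ℕ) : ℤ → ℂ := fun x =>
  if 0 ≤ x then ((x.toNat + m - 1).choose x.toNat : ℂ) * ((1 : ℂ) - (q : ℂ)) ^ m * (q : ℂ) ^ x
  else 0

/-- Component `x_k` (1-based) of a vector `x : Fin N → ℤ`. -/
def vcomp {N : ℕ} (x : Fin N → ℤ) (k : ℕ) : ℤ :=
  if h : k - 1 < N then x ⟨k - 1, h⟩ else 0

/-- 1-based access to a finite tuple, extended by `0` out of range. -/
def fext {d : ℕ} {α : Type*} [Zero α] (x : Fin d → α) : ℕ → α := fun k =>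
  if h : 1 ≤ k ∧ k ≤ d then x ⟨k - 1, by omega⟩ else 0

/-- The growth function `𝐆(m,n)` built from weights `w`. -/
def growth (w : ℕ → ℕ → ℕ) : ℕ → ℕ → ℕ
  | 0, _ => 0
  | _ + 1, 0 => 0
  | m + 1, n + 1 => max (growth w m (n + 1)) (growth w (m + 1) n) + w (m + 1) (n + 1)
  termination_by m n => m + n

/-- Normalized contour integral `(1/(2πi)) ∮_{|z−c|=R} f(z) dz` (counterclockwise circle). -/
def cint (c : ℂ) (R : ℝ) (f : ℂ → ℂ) : ℂ :=
  (2 * Real.pi * Complex.I)⁻¹ * (∮ z in C(c, R), f z)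

/-- Iterated normalized contour integrals with centers `c` and radii `R`. -/
def multiCintC : (k : ℕ) → (c : Fin k → ℂ) → (R : Fin k → ℝ) → ((Fin k → ℂ) → ℂ) → ℂ
  | 0, _, _, f => f ![]
  | k + 1, c, R, f =>
      cint (c 0) (R 0) fun z =>
        multiCintC k (fun t => c t.succ) (fun t => R t.succ) fun w => f (Fin.cons z w)

/-- `G*(w | n, m, a)`. -/
def Gstar (q : ℝ) (n m a : ℤ) (w : ℂ) : ℂ :=
  w ^ n * (1 - w) ^ (a + m) / (1 - w / (1 - (q : ℂ))) ^ m

/-- `G(w | n, m, a) = G*(w | n,m,a)/G*(1−√q | n,m,a)`. -/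
def Gfun (q : ℝ) (n m a : ℤ) (w : ℂ) : ℂ :=
  Gstar q n m a w / Gstar q n m a (1 - (Real.sqrt q : ℂ))

/-- The block index `r` such that `n_{r−1} < i ≤ n_r`. -/
def blockIdx (n : ℕ → ℕ) (i : ℕ) : ℕ := sInf {r : ℕ | i ≤ n r}

/-- `r* = min{r, p−1}` for the block of `i`. -/
def rstar (p : ℕ) (n : ℕ → ℕ) (i : ℕ) : ℕ := min (blockIdx n i) (p - 1)

/-- `m(i) = m_{r*}`. -/
def mOf (p : ℕ) (n m : ℕ → ℕ) (i : ℕ) : ℕ := m (rstar p n i)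

/-- `a(i) = a_{r*}`. -/
def aOf (p : ℕ) (n : ℕ → ℕ) (a : ℕ → ℤ) (i : ℕ) : ℤ := a (rstar p n i)

/-- `n(i) = n_{r*}`. -/
def nOf (p : ℕ) (n : ℕ → ℕ) (i : ℕ) : ℕ := n (rstar p n i)

/-!
Since `G(w | n+1, m, a) = (w / w_c) · G(w | n, m, a)`, the two neighbours
`F(ℓ) = 1/(G(w₁ | n−ℓ, m, a) G(w₂ | ℓ−n', m', a'))` and `F(ℓ−1)` of the `ℓ`-th summand are
that summand times `w₁/w_c` and `w₂/w_c`. Hence the summand is `(w_c/(w₁−w₂)) (F(ℓ) − F(ℓ−1))`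
and the sum telescopes.
-/

open Finset

lemma one_sub_sqrt_ne_zero {q : ℝ} (hq1 : q < 1) : (1 : ℂ) - (Real.sqrt q : ℂ) ≠ 0 := by
  rw [sub_ne_zero, ne_comm, ← Complex.ofReal_one, Ne, Complex.ofReal_inj]
  exact ((Real.sqrt_lt' one_pos).2 (by simpa using hq1)).ne

lemma Gstar_add_one (q : ℝ) (n m a : ℤ) {w : ℂ} (hw : w ≠ 0) :
    Gstar q (n + 1) m a w = w * Gstar q n m a w := by
  rw [Gstar, Gstar, zpow_add_one₀ hw]
  ring

lemma Gfun_add_one {q : ℝ} (hq1 : q < 1) (n m a : ℤ) {w : ℂ} (hw : w ≠ 0) :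
    Gfun q (n + 1) m a w = w / (1 - (Real.sqrt q : ℂ)) * Gfun q n m a w := by
  rw [Gfun, Gfun, Gstar_add_one q n m a hw, Gstar_add_one q n m a (one_sub_sqrt_ne_zero hq1),
    mul_div_mul_comm]

lemma inv_Gfun_mul_Gfun_eq_mul_sub {q : ℝ} (hq1 : q < 1) {w1 w2 : ℂ} (hw1 : w1 ≠ 0)
    (hw2 : w2 ≠ 0) (hne : w1 ≠ w2) (n m a n' m' a' t : ℤ) :
    (Gfun q (n - t + 1) m a w1 * Gfun q (t - n') m' a' w2)⁻¹
      = (1 - (Real.sqrt q : ℂ)) / (w1 - w2) *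
          ((Gfun q (n - t) m a w1 * Gfun q (t - n') m' a' w2)⁻¹
            - (Gfun q (n - (t - 1)) m a w1 * Gfun q (t - 1 - n') m' a' w2)⁻¹) := by
  have hc := one_sub_sqrt_ne_zero hq1
  set P := (Gfun q (n - t + 1) m a w1 * Gfun q (t - n') m' a' w2)⁻¹
  have hright : (Gfun q (n - t) m a w1 * Gfun q (t - n') m' a' w2)⁻¹
      = w1 / (1 - (Real.sqrt q : ℂ)) * P := by
    simp only [P, Gfun_add_one hq1 _ _ _ hw1, mul_inv, inv_div]
    field_simp
  have hleft : (Gfun q (n - (t - 1)) m a w1 * Gfun q (t - 1 - n') m' a' w2)⁻¹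
      = w2 / (1 - (Real.sqrt q : ℂ)) * P := by
    have h := Gfun_add_one hq1 (t - 1 - n') m' a' hw2
    rw [show t - 1 - n' + 1 = t - n' by ring] at h
    simp only [P, h, show n - (t - 1) = n - t + 1 by ring, mul_inv, inv_div]
    field_simp
  rw [hright, hleft]
  field_simp [sub_ne_zero.mpr hne]

lemma sum_Ioc_sub_intCast {M : Type*} [AddCommGroup M] (f : ℤ → M) {a b : ℕ} (hab : a ≤ b) :
    ∑ l ∈ Ioc a b, (f l - f (l - 1)) = f b - f a := by
  induction b, hab using Nat.le_induction with
  | base => simp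
  | succ b hab ih =>
    rw [sum_Ioc_succ_top hab, ih]
    push_cast
    rw [add_sub_cancel_right, sub_add_sub_cancel']

theorem statement16_general
    (q : ℝ) (hq1 : q < 1)
    (N1 N2 : ℕ) (hN : N1 < N2)
    (w1 w2 : ℂ) (hw10 : w1 ≠ 0)
    (hw20 : w2 ≠ 0) (hne : w1 ≠ w2)
    (n m a n' m' a' : ℤ) :
    (∑ l ∈ Finset.Ioc N1 N2,
        (Gfun q (n - l + 1) m a w1 * Gfun q ((l : ℤ) - n') m' a' w2)⁻¹)
      = ((1 - (Real.sqrt q : ℂ)) / (w1 - w2)) *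
          ((Gfun q (n - N2) m a w1 * Gfun q ((N2 : ℤ) - n') m' a' w2)⁻¹
            - (Gfun q (n - N1) m a w1 * Gfun q ((N1 : ℤ) - n') m' a' w2)⁻¹) := by
  rw [sum_congr rfl fun (l : ℕ) _ =>
    inv_Gfun_mul_Gfun_eq_mul_sub hq1 hw10 hw20 hne n m a n' m' a' l, ← mul_sum]
  congr 1
  exact sum_Ioc_sub_intCast (fun t => (Gfun q (n - t) m a w1 * Gfun q (t - n') m' a' w2)⁻¹)
    hN.le

/-- (Lemma `lem:multiply` of the paper.)  The geometric summation
identity used to multiply kernels by `B`, with `w_c = 1 − √q`. -/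
theorem statement16
    (q : ℝ) (hq0 : 0 < q) (hq1 : q < 1)
    (N1 N2 : ℕ) (hN : N1 < N2)
    (w1 w2 : ℂ) (hw10 : w1 ≠ 0) (hw11 : w1 ≠ 1) (hw1q : w1 ≠ 1 - (q : ℂ))
    (hw20 : w2 ≠ 0) (hw21 : w2 ≠ 1) (hw2q : w2 ≠ 1 - (q : ℂ)) (hne : w1 ≠ w2)
    (n m a n' m' a' : ℤ) :
    (∑ l ∈ Finset.Ioc N1 N2,
        (Gfun q (n - l + 1) m a w1 * Gfun q ((l : ℤ) - n') m' a' w2)⁻¹)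
      = ((1 - (Real.sqrt q : ℂ)) / (w1 - w2)) *
          ((Gfun q (n - N2) m a w1 * Gfun q ((N2 : ℤ) - n') m' a' w2)⁻¹
            - (Gfun q (n - N1) m a w1 * Gfun q ((N1 : ℤ) - n') m' a' w2)⁻¹) :=
  statement16_general q hq1 N1 N2 hN w1 w2 hw10 hw20 hne n m a n' m' a'

end
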